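/- Let G be a connected graph with no twins (i.e., no two distinct vertices u1, u2 satisfy N_G[u1] = N_G[u2] or N_G(u1) = N_G(u2)). Then for any graph H, dim_f(G[H]) = |V(G)| · l_f(H). -/

import Mathlib

open Finset

variable {α β V : Type*}

/-- The corona product `G ⊙ H`. -/
def SimpleGraph.corona (G : SimpleGraph α) (H : SimpleGraph β) :
    SimpleGraph (α ⊕ α × β) where
  Adj x y :=
    match x, y with
    | Sum.inl u1, Sum.inl u2 => G.Adj u1 u2
    | Sum.inl u1, Sum.inr p => u1 = p.1
    | Sum.inr p, Sum.inl u2 => p.1 = u2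
    | Sum.inr p, Sum.inr q => p.1 = q.1 ∧ H.Adj p.2 q.2
  symm := by
    constructor
    rintro (u1 | p) (u2 | q) h
    · exact h.symm
    · exact h.symm
    · exact h.symm
    · exact ⟨h.1.symm, h.2.symm⟩
  loopless := by
    constructor
    rintro (u | p) h
    · exact G.irrefl h
    · exact H.irrefl h.2

/-- The lexicographic product `G[H]`. -/
def SimpleGraph.lexProd (G : SimpleGraph α) (H : SimpleGraph β) :
    SimpleGraph (α × β) where
  Adj x y := G.Adj x.1 y.1 ∨ (x.1 = y.1 ∧ H.Adj x.2 y.2)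
  symm := by
    constructor
    rintro x y (h | ⟨h1, h2⟩)
    · exact Or.inl h.symm
    · exact Or.inr ⟨h1.symm, h2.symm⟩
  loopless := by
    constructor
    rintro x (h | ⟨h1, h2⟩)
    · exact G.irrefl h
    · exact H.irrefl h2

open scoped Classical in
/-- `R_F{x,y}`: the set of vertices resolving `x` and `y` (distance measured by `edist`,
which is `∞` between vertices in different components). -/
noncomputable def resolvingFinset (F : SimpleGraph V) [Fintype V] (x y : V) : Finset V :=
  univ.filter fun z => F.edist x z ≠ F.edist y z

/-- `S_H{v₁,v₂} = {v₁,v₂} ∪ (N_H(v₁) Δ N_H(v₂))`. -/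
def locatingFinset (H : SimpleGraph V) [Fintype V] [DecidableEq V]
    [DecidableRel H.Adj] (v1 v2 : V) : Finset V :=
  {v1, v2} ∪ symmDiff (H.neighborFinset v1) (H.neighborFinset v2)

/-- A resolving function of `F`. -/
def IsResolvingFn (F : SimpleGraph V) [Fintype V] (g : V → ℝ) : Prop :=
  (∀ v, g v ∈ Set.Icc (0 : ℝ) 1) ∧
    ∀ x y : V, x ≠ y → 1 ≤ ∑ z ∈ resolvingFinset F x y, g z

/-- The fractional metric dimension `dim_f(F)`. -/
noncomputable def fracMetricDim (F : SimpleGraph V) [Fintype V] : ℝ :=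
  sInf {w | ∃ g, IsResolvingFn F g ∧ w = ∑ v, g v}

/-- A locating function of `H`. -/
def IsLocatingFn (H : SimpleGraph V) [Fintype V] [DecidableEq V]
    [DecidableRel H.Adj] (g : V → ℝ) : Prop :=
  (∀ v, g v ∈ Set.Icc (0 : ℝ) 1) ∧
    ∀ v1 v2 : V, v1 ≠ v2 → 1 ≤ ∑ v ∈ locatingFinset H v1 v2, g v

/-- `l_f(H)`: the minimum weight of a locating function. -/
noncomputable def fracLoc (H : SimpleGraph V) [Fintype V] [DecidableEq V]
    [DecidableRel H.Adj] : ℝ :=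
  sInf {w | ∃ g, IsLocatingFn H g ∧ w = ∑ v, g v}

open scoped Classical in
/-- `λ(H)`: maximum number of common neighbours of two adjacent vertices, `-1` if no edges. -/
noncomputable def lambdaMax (H : SimpleGraph V) [Fintype V] : ℤ :=
  if hne : (univ.filter fun p : V × V => H.Adj p.1 p.2).Nonempty then
    (univ.filter fun p : V × V => H.Adj p.1 p.2).sup' hne fun p =>
      ((univ.filter fun w => H.Adj p.1 w ∧ H.Adj p.2 w).card : ℤ)
  else -1

open scoped Classical in
/-- `μ(H)`: maximum number of common neighbours of two distinct nonadjacent vertices,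
`0` for complete graphs. -/
noncomputable def muMax (H : SimpleGraph V) [Fintype V] : ℤ :=
  if hne : (univ.filter fun p : V × V => p.1 ≠ p.2 ∧ ¬H.Adj p.1 p.2).Nonempty then
    (univ.filter fun p : V × V => p.1 ≠ p.2 ∧ ¬H.Adj p.1 p.2).sup' hne fun p =>
      ((univ.filter fun w => H.Adj p.1 w ∧ H.Adj p.2 w).card : ℤ)
  else 0

/-- A graph is vertex-transitive if its automorphism group is transitive on vertices. -/
def IsVertexTransitive (H : SimpleGraph V) : Prop :=
  ∀ u v : V, ∃ φ : H ≃g H, φ u = v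

/-- Two distinct vertices are twins if they have the same closed or the same open
neighbourhood. -/
def SimpleGraph.Twins (G : SimpleGraph V) (u1 u2 : V) : Prop :=
  u1 ≠ u2 ∧ (insert u1 (G.neighborSet u1) = insert u2 (G.neighborSet u2) ∨
    G.neighborSet u1 = G.neighborSet u2)

open scoped Classical in
/-- `m₁(G)`: number of vertices in twin-equivalence classes of type 1 (singletons). -/
noncomputable def m1 (G : SimpleGraph V) [Fintype V] : ℕ :=
  (univ.filter fun u => ∀ w, ¬G.Twins u w).card

open scoped Classical in
/-- `m₂(G)`: number of vertices in twin-equivalence classes of type 2 (cliques). -/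
noncomputable def m2 (G : SimpleGraph V) [Fintype V] : ℕ :=
  (univ.filter fun u => ∃ w, G.Twins u w ∧ G.Adj u w).card

open scoped Classical in
/-- `m₃(G)`: number of vertices in twin-equivalence classes of type 3 (independent sets). -/
noncomputable def m3 (G : SimpleGraph V) [Fintype V] : ℕ :=
  (univ.filter fun u => ∃ w, G.Twins u w ∧ ¬G.Adj u w).card
/-! In `G[H]` two vertices in different fibres are at the `G`-distance of their first
coordinates, while two vertices of one fibre over a non-isolated vertex are at distance
`0`, `1` or `2` according to `H`. Hence the vertices resolving two vertices of a fibre are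
exactly the copy of their locating set in that fibre, so every resolving function of `G[H]`
restricts to a locating function of `H` on each of the `|V(G)|` fibres. Conversely, a locating
function `h` of `H` spread over all fibres is resolving: within a fibre by the same
observation, and across fibres `u₁ ≠ u₂` because, `G` having no twins, some `w ∉ {u₁, u₂}`
is adjacent to exactly one of them, and then its whole fibre, of weight `∑ h ≥ 1`,
resolves the pair. -/

namespace SimpleGraph

variable {W : Type*}

lemma edist_le_of_map_adj_or_eq {G : SimpleGraph V} {G' : SimpleGraph W} (f : V → W)
    (hf : ∀ {x y}, G.Adj x y → G'.Adj (f x) (f y) ∨ f x = f y) (u v : V) :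
    G'.edist (f u) (f v) ≤ G.edist u v := by
  have walk_bound : ∀ {x y : V} (p : G.Walk x y), G'.edist (f x) (f y) ≤ p.length := by
    intro x y p
    induction p with
    | nil => simp
    | @cons a b c h q ih =>
      calc G'.edist (f a) (f c) ≤ G'.edist (f a) (f b) + G'.edist (f b) (f c) :=
            G'.edist_triangle
        _ ≤ 1 + q.length := add_le_add (edist_le_one_iff_adj_or_eq.mpr (hf h)) ih
        _ = (Walk.cons h q).length := by rw [Walk.length_cons, Nat.cast_succ, add_comm]
  rw [edist_eq_sInf]
  exact le_sInf (by rintro _ ⟨p, rfl⟩; exact walk_bound p)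

variable {G : SimpleGraph α} {H : SimpleGraph β}

lemma edist_lexProd_of_ne {u₁ u₂ : α} (hu : u₁ ≠ u₂) (v₁ v₂ : β) :
    (G.lexProd H).edist (u₁, v₁) (u₂, v₂) = G.edist u₁ u₂ := by
  refine le_antisymm ?_ ?_
  · -- `w ↦ (w, σ w)` maps edges of `G` to edges of `G[H]` for every choice of `σ`.
    classical
    let σ : α → β := Function.update (fun _ => v₂) u₁ v₁
    have h := edist_le_of_map_adj_or_eq (G' := G.lexProd H) (fun w => (w, σ w))
      (fun h => Or.inl (Or.inl h)) u₁ u₂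
    simpa [σ, hu.symm] using h
  · exact edist_le_of_map_adj_or_eq (G := G.lexProd H) Prod.fst
      (fun h => h.imp id And.left) (u₁, v₁) (u₂, v₂)

lemma edist_lexProd_fibre [DecidableEq β] [DecidableRel H.Adj] {u w : α} (hw : G.Adj u w)
    (v t : β) :
    (G.lexProd H).edist (u, v) (u, t) = if v = t then 0 else if H.Adj v t then 1 else 2 := by
  split_ifs with hvt hadj
  · rw [hvt, edist_self]
  · exact edist_eq_one_iff_adj.mpr (Or.inr ⟨rfl, hadj⟩)
  · refine edist_eq_two_iff.mpr ⟨by simpa using hvt, ?_, ⟨(w, v), ?_⟩⟩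
    · rintro (h | ⟨-, h⟩)
      exacts [G.irrefl h, hadj h]
    · exact ⟨Or.inl hw, Or.inl hw⟩

lemma exists_edist_ne_of_not_twins {u₁ u₂ : α} (hu : u₁ ≠ u₂) (htw : ¬G.Twins u₁ u₂) :
    ∃ w, u₁ ≠ w ∧ u₂ ≠ w ∧ G.edist u₁ w ≠ G.edist u₂ w := by
  suffices ∃ w, u₁ ≠ w ∧ u₂ ≠ w ∧ ¬(G.Adj u₁ w ↔ G.Adj u₂ w) by
    obtain ⟨w, h₁, h₂, hw⟩ := this
    refine ⟨w, h₁, h₂, fun hd => hw ?_⟩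
    rw [← edist_eq_one_iff_adj, ← edist_eq_one_iff_adj, hd]
  by_contra! hw
  refine htw ⟨hu, ?_⟩
  by_cases hadj : G.Adj u₁ u₂
  · left
    ext x
    by_cases h₁ : u₁ = x <;> by_cases h₂ : u₂ = x <;>
      grind [mem_neighborSet, adj_comm]
  · right
    ext x
    by_cases h₁ : u₁ = x <;> by_cases h₂ : u₂ = x <;>
      grind [mem_neighborSet, adj_comm, G.loopless.irrefl]

end SimpleGraph

open SimpleGraph

section Fibres

variable {G : SimpleGraph α} {H : SimpleGraph β} [Fintype α] [Fintype β]

lemma map_univ_subset_resolvingFinset_lexProd {u₁ u₂ w : α} (h₁ : u₁ ≠ w) (h₂ : u₂ ≠ w)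
    (hd : G.edist u₁ w ≠ G.edist u₂ w) (v₁ v₂ : β) :
    univ.map (Function.Embedding.sectR w β) ⊆ resolvingFinset (G.lexProd H) (u₁, v₁) (u₂, v₂) := by
  intro z hz
  obtain ⟨t, -, rfl⟩ := mem_map.mp hz
  simpa [resolvingFinset, edist_lexProd_of_ne h₁, edist_lexProd_of_ne h₂] using hd

variable [DecidableEq β] [DecidableRel H.Adj]

lemma mem_locatingFinset {v₁ v₂ t : β} :
    t ∈ locatingFinset H v₁ v₂ ↔ t = v₁ ∨ t = v₂ ∨ ¬(H.Adj v₁ t ↔ H.Adj v₂ t) := by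
  simp only [locatingFinset, mem_union, mem_insert, mem_singleton, mem_symmDiff,
    mem_neighborFinset]
  tauto

lemma resolvingFinset_lexProd_fibre {u w : α} (hw : G.Adj u w) {v₁ v₂ : β} (hv : v₁ ≠ v₂) :
    resolvingFinset (G.lexProd H) (u, v₁) (u, v₂) =
      (locatingFinset H v₁ v₂).map (Function.Embedding.sectR u β) := by
  ext ⟨u', t⟩
  simp only [resolvingFinset, mem_filter, mem_univ, true_and, mem_map,
    Function.Embedding.sectR_apply, Prod.mk.injEq]
  by_cases hu : u = u'
  · subst hu
    simp only [true_and, exists_eq_right]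
    rw [edist_lexProd_fibre hw, edist_lexProd_fibre hw, mem_locatingFinset]
    split_ifs <;> simp_all [eq_comm]
  · rw [edist_lexProd_of_ne hu, edist_lexProd_of_ne hu]
    simp [hu]

end Fibres

section FractionalInvariants

variable [Fintype V]

lemma isResolvingFn_one (F : SimpleGraph V) : IsResolvingFn F 1 := by
  refine ⟨fun _ => ⟨zero_le_one, le_rfl⟩, fun x y hxy => ?_⟩
  have hx : x ∈ resolvingFinset F x y := by
    simp only [resolvingFinset, mem_filter, mem_univ, true_and, edist_self]
    exact fun h => hxy (edist_eq_zero_iff.mp h.symm).symm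
  simpa using card_pos.mpr ⟨x, hx⟩

lemma isLocatingFn_one [DecidableEq V] (H : SimpleGraph V) [DecidableRel H.Adj] :
    IsLocatingFn H 1 := by
  refine ⟨fun _ => ⟨zero_le_one, le_rfl⟩, fun v₁ v₂ _ => ?_⟩
  have hv : v₁ ∈ locatingFinset H v₁ v₂ := by simp [locatingFinset]
  simpa using card_pos.mpr ⟨v₁, hv⟩

lemma fracMetricDim_le_sum {F : SimpleGraph V} {g : V → ℝ} (hg : IsResolvingFn F g) :
    fracMetricDim F ≤ ∑ v, g v :=
  csInf_le ⟨0, by rintro _ ⟨g, hg, rfl⟩; exact sum_nonneg fun v _ => (hg.1 v).1⟩ ⟨g, hg, rfl⟩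

lemma le_fracMetricDim {F : SimpleGraph V} {c : ℝ}
    (h : ∀ g, IsResolvingFn F g → c ≤ ∑ v, g v) : c ≤ fracMetricDim F :=
  le_csInf ⟨_, 1, isResolvingFn_one F, rfl⟩ (by rintro _ ⟨g, hg, rfl⟩; exact h g hg)

variable [DecidableEq V] {H : SimpleGraph V} [DecidableRel H.Adj]

lemma fracLoc_le_sum {g : V → ℝ} (hg : IsLocatingFn H g) : fracLoc H ≤ ∑ v, g v :=
  csInf_le ⟨0, by rintro _ ⟨g, hg, rfl⟩; exact sum_nonneg fun v _ => (hg.1 v).1⟩ ⟨g, hg, rfl⟩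

lemma le_fracLoc {c : ℝ} (h : ∀ g, IsLocatingFn H g → c ≤ ∑ v, g v) : c ≤ fracLoc H :=
  le_csInf ⟨_, 1, isLocatingFn_one H, rfl⟩ (by rintro _ ⟨g, hg, rfl⟩; exact h g hg)

lemma IsLocatingFn.one_le_sum [Nontrivial V] {g : V → ℝ} (hg : IsLocatingFn H g) :
    1 ≤ ∑ v, g v := by
  obtain ⟨v₁, v₂, hv⟩ := exists_pair_ne V
  exact (hg.2 v₁ v₂ hv).trans
    (sum_le_sum_of_subset_of_nonneg (subset_univ _) fun v _ _ => (hg.1 v).1)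

end FractionalInvariants

section LexProd

variable {G : SimpleGraph α} {H : SimpleGraph β} [Fintype α] [Fintype β] [DecidableEq β]
  [DecidableRel H.Adj]

lemma IsResolvingFn.isLocatingFn_fibre {g : α × β → ℝ} (hg : IsResolvingFn (G.lexProd H) g)
    {u w : α} (hw : G.Adj u w) : IsLocatingFn H fun v => g (u, v) := by
  refine ⟨fun v => hg.1 _, fun v₁ v₂ hv => ?_⟩
  have h := hg.2 (u, v₁) (u, v₂) (by simpa using hv)
  rwa [resolvingFinset_lexProd_fibre hw hv, sum_map] at h

lemma IsLocatingFn.isResolvingFn_lexProd [Nontrivial β] (hG : ∀ u, ∃ w, G.Adj u w)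
    (htw : ∀ u₁ u₂ : α, ¬G.Twins u₁ u₂) {h : β → ℝ} (hh : IsLocatingFn H h) :
    IsResolvingFn (G.lexProd H) fun p => h p.2 := by
  refine ⟨fun p => hh.1 p.2, ?_⟩
  rintro ⟨u₁, v₁⟩ ⟨u₂, v₂⟩ hne
  by_cases hu : u₁ = u₂
  · subst hu
    have hv : v₁ ≠ v₂ := by simpa using hne
    obtain ⟨w, hw⟩ := hG u₁
    rw [resolvingFinset_lexProd_fibre hw hv, sum_map]
    exact hh.2 v₁ v₂ hv
  · obtain ⟨w, h₁, h₂, hd⟩ := exists_edist_ne_of_not_twins hu (htw u₁ u₂)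
    calc (1 : ℝ) ≤ ∑ v, h v := hh.one_le_sum
      _ = ∑ p ∈ univ.map (Function.Embedding.sectR w β), h p.2 := by rw [sum_map]; rfl
      _ ≤ _ := sum_le_sum_of_subset_of_nonneg
          (map_univ_subset_resolvingFinset_lexProd h₁ h₂ hd v₁ v₂) fun p _ _ => (hh.1 p.2).1

end LexProd

/-- If a connected graph `G` has no twins, then for any graph `H`,
`dim_f(G[H]) = |V(G)| · l_f(H)`. -/
theorem stmt_17 {α β : Type*} [Fintype α] [Fintype β] [DecidableEq β]
    (G : SimpleGraph α) (H : SimpleGraph β) [DecidableRel H.Adj]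
    (hG : G.Connected) (hca : 2 ≤ Fintype.card α) (hcb : 2 ≤ Fintype.card β)
    (htw : ∀ u1 u2 : α, ¬G.Twins u1 u2) :
    fracMetricDim (G.lexProd H) = (Fintype.card α : ℝ) * fracLoc H := by
  have : Nontrivial α := Fintype.one_lt_card_iff_nontrivial.mp hca
  have : Nontrivial β := Fintype.one_lt_card_iff_nontrivial.mp hcb
  have hadj : ∀ u, ∃ w, G.Adj u w := hG.preconnected.exists_adj_of_nontrivial
  have hn : (0 : ℝ) < Fintype.card α := by exact_mod_cast Fintype.card_pos
  refine le_antisymm ?_ (le_fracMetricDim fun g hg => ?_)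
  · rw [← div_le_iff₀' hn]
    refine le_fracLoc fun h hh => ?_
    rw [div_le_iff₀' hn]
    calc fracMetricDim (G.lexProd H) ≤ ∑ p : α × β, h p.2 :=
          fracMetricDim_le_sum (hh.isResolvingFn_lexProd hadj htw)
      _ = Fintype.card α * ∑ v, h v := by simp [Fintype.sum_prod_type]
  · calc (Fintype.card α : ℝ) * fracLoc H = ∑ _u : α, fracLoc H := by
          rw [sum_const, card_univ, nsmul_eq_mul]
      _ ≤ ∑ u, ∑ v, g (u, v) := sum_le_sum fun u _ =>
          fracLoc_le_sum (hg.isLocatingFn_fibre (hadj u).choose_spec)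
      _ = ∑ p, g p := (Fintype.sum_prod_type g).symm
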